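/- arXiv:1604.03849 — 4 statements merged into one kernel-verified Lean document; each statement's English description precedes it below -/
import Mathlib

section
/- Let G be a subgroup of a finite group G', and let H₁, H₂ be subgroups of G that are almost conjugate in G. Then H₁ and H₂ (viewed as subgroups of G') are almost conjugate in G'. -/
/-- Subgroups `H₁` and `H₂` of a group `G` are *almost conjugate* if for every `g ∈ G`
the cardinality of `H₁ ∩ [g]_G` equals the cardinality of `H₂ ∩ [g]_G`, where `[g]_G`
denotes the `G`-conjugacy class of `g`. -/
def IsAlmostConjugate {G : Type*} [Group G] (H₁ H₂ : Subgroup G) : Prop :=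
  ∀ g : G, Nat.card {x : G // x ∈ H₁ ∧ IsConj g x} =
    Nat.card {x : G // x ∈ H₂ ∧ IsConj g x}

lemma aux_card_map {G' : Type*} [Group G'] (G : Subgroup G') (H : Subgroup G) (g : G') :
    Nat.card {x : G' // x ∈ H.map G.subtype ∧ IsConj g x} =
    Nat.card {y : G // y ∈ H ∧ IsConj g (y : G')} := by
  refine Nat.card_congr (Equiv.ofBijective
    (fun y : {y : G // y ∈ H ∧ IsConj g (y : G')} =>
      (⟨(y.1 : G'), Subgroup.mem_map_of_mem G.subtype y.2.1, y.2.2⟩ :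
        {x : G' // x ∈ H.map G.subtype ∧ IsConj g x})) ⟨?_, ?_⟩).symm
  · rintro ⟨y, _⟩ ⟨z, _⟩ hyz
    simp only [Subtype.mk.injEq, SetLike.coe_eq_coe] at hyz ⊢
    exact hyz
  · rintro ⟨x, hx, hc⟩
    obtain ⟨y, hy, rfl⟩ := Subgroup.mem_map.mp hx
    exact ⟨⟨y, hy, hc⟩, rfl⟩

lemma aux_fiber {G' : Type*} [Group G'] [Finite G'] (G : Subgroup G')
    (H₁ H₂ : Subgroup G) (h : IsAlmostConjugate H₁ H₂) (g : G') (c : ConjClasses G) :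
    Nat.card {y : G // (y ∈ H₁ ∧ IsConj g (y : G')) ∧ ConjClasses.mk y = c} =
    Nat.card {y : G // (y ∈ H₂ ∧ IsConj g (y : G')) ∧ ConjClasses.mk y = c} := by
  obtain ⟨r, rfl⟩ := c.exists_rep
  by_cases hr : IsConj g (r : G')
  · have key : ∀ y : G, ((y ∈ H₁ ∧ IsConj g (y : G')) ∧ ConjClasses.mk y = ConjClasses.mk r)
        ↔ (y ∈ H₁ ∧ IsConj r y) := by
      intro y
      rw [ConjClasses.mk_eq_mk_iff_isConj]
      constructor
      · rintro ⟨⟨h1, _⟩, h3⟩; exact ⟨h1, h3.symm⟩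
      · rintro ⟨h1, h2⟩
        exact ⟨⟨h1, hr.trans (G.subtype.map_isConj h2)⟩, h2.symm⟩
    have key2 : ∀ y : G, ((y ∈ H₂ ∧ IsConj g (y : G')) ∧ ConjClasses.mk y = ConjClasses.mk r)
        ↔ (y ∈ H₂ ∧ IsConj r y) := by
      intro y
      rw [ConjClasses.mk_eq_mk_iff_isConj]
      constructor
      · rintro ⟨⟨h1, _⟩, h3⟩; exact ⟨h1, h3.symm⟩
      · rintro ⟨h1, h2⟩
        exact ⟨⟨h1, hr.trans (G.subtype.map_isConj h2)⟩, h2.symm⟩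
    rw [Nat.card_congr (Equiv.subtypeEquivRight key),
      Nat.card_congr (Equiv.subtypeEquivRight key2)]
    exact h r
  · have e1 : IsEmpty {y : G // (y ∈ H₁ ∧ IsConj g (y : G')) ∧
        ConjClasses.mk y = ConjClasses.mk r} := by
      refine ⟨fun ⟨y, ⟨_, hc⟩, hm⟩ => hr ?_⟩
      rw [ConjClasses.mk_eq_mk_iff_isConj] at hm
      exact hc.trans (G.subtype.map_isConj hm)
    have e2 : IsEmpty {y : G // (y ∈ H₂ ∧ IsConj g (y : G')) ∧
        ConjClasses.mk y = ConjClasses.mk r} := by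
      refine ⟨fun ⟨y, ⟨_, hc⟩, hm⟩ => hr ?_⟩
      rw [ConjClasses.mk_eq_mk_iff_isConj] at hm
      exact hc.trans (G.subtype.map_isConj hm)
    rw [Nat.card_of_isEmpty, Nat.card_of_isEmpty]

lemma aux_sum {α β : Type*} [Finite α] [Fintype β] (P : α → Prop) :
    ∀ f : α → β, Nat.card {a : α // P a} =
      ∑ b : β, Nat.card {a : α // P a ∧ f a = b} := by
  classical
  intro f
  have := Fintype.ofFinite α
  rw [Nat.card_congr (Equiv.sigmaFiberEquiv (fun a : {a : α // P a} => f a.1)).symm,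
    Nat.card_eq_fintype_card, Fintype.card_sigma]
  refine Finset.sum_congr rfl fun b _ => ?_
  rw [← Nat.card_eq_fintype_card]
  exact Nat.card_congr ⟨fun x => ⟨x.1.1, x.1.2, x.2⟩, fun y => ⟨⟨y.1, y.2.1⟩, y.2.2⟩,
    fun _ => rfl, fun _ => rfl⟩

/-- If `G` is a subgroup of the finite group `G'` and `H₁`, `H₂` are almost conjugate
subgroups of `G`, then `H₁` and `H₂`, viewed as subgroups of `G'`, are almost
conjugate in `G'`. -/
theorem isAlmostConjugate_map_subtype {G' : Type*} [Group G'] [Finite G']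
    (G : Subgroup G') (H₁ H₂ : Subgroup G) (h : IsAlmostConjugate H₁ H₂) :
    IsAlmostConjugate (H₁.map G.subtype) (H₂.map G.subtype) := by
  intro g
  have : Fintype (ConjClasses G) := Fintype.ofFinite _
  rw [aux_card_map, aux_card_map,
    aux_sum (fun y : G => y ∈ H₁ ∧ IsConj g (y : G')) ConjClasses.mk,
    aux_sum (fun y : G => y ∈ H₂ ∧ IsConj g (y : G')) ConjClasses.mk]
  exact Finset.sum_congr rfl fun c _ => aux_fiber G H₁ H₂ h g c
end

section
/- Let I be a finite index set, let (Gᵢ)_{i∈I} be a family of finite groups, and for each i ∈ I let H_{i,1} and H_{i,2} be almost conjugate subgroups of Gᵢ. Then the product subgroups ∏_{i∈I} H_{i,1} and ∏_{i∈I} H_{i,2} are almost conjugate subgroups of the direct product ∏_{i∈I} Gᵢ. -/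
/-- If `(Gᵢ)_{i ∈ I}` is a finite family of finite groups and `H_{i,1}`, `H_{i,2}` are
almost conjugate subgroups of `Gᵢ` for every `i`, then the product subgroups
`∏ᵢ H_{i,1}` and `∏ᵢ H_{i,2}` are almost conjugate in the direct product `∏ᵢ Gᵢ`. -/
theorem isAlmostConjugate_pi {I : Type*} [Fintype I] (G : I → Type*)
    [∀ i, Group (G i)] [∀ i, Finite (G i)] (H₁ H₂ : ∀ i, Subgroup (G i))
    (h : ∀ i, IsAlmostConjugate (H₁ i) (H₂ i)) :
    IsAlmostConjugate (Subgroup.pi Set.univ H₁) (Subgroup.pi Set.univ H₂) := by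
  intro g
  have key : ∀ (H : ∀ i, Subgroup (G i)),
      Nat.card {x : ∀ i, G i // x ∈ Subgroup.pi Set.univ H ∧ IsConj g x} =
      ∏ i, Nat.card {y : G i // y ∈ H i ∧ IsConj (g i) y} := by
    intro H
    rw [← Nat.card_pi]
    apply Nat.card_congr
    refine ⟨fun x i => ⟨x.1 i, x.2.1 i trivial, ?_⟩, fun y => ⟨fun i => (y i).1, ?_, ?_⟩,
      fun x => rfl, fun y => rfl⟩
    · obtain ⟨c, hc⟩ := isConj_iff.mp x.2.2
      exact isConj_iff.mpr ⟨c i, congrFun hc i⟩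
    · exact fun i _ => (y i).2.1
    · choose c hc using fun i => isConj_iff.mp (y i).2.2
      exact isConj_iff.mpr ⟨fun i => c i, funext fun i => hc i⟩
  rw [key H₁, key H₂]
  exact Finset.prod_congr rfl fun i _ => h i (g i)
end

section
/- Let p be a prime and q = pⁿ a prime power. The Heisenberg group H(𝔽_q) contains a family of at least p^{n(n−1)} subgroups, each of order q, which are pairwise almost conjugate and pairwise nonconjugate in H(𝔽_q). -/
open Matrix

/-- The Heisenberg group `H(F)` over a field `F`: the subgroup of `GL(3, F)` consisting
of upper-triangular matrices with all diagonal entries equal to `1`. -/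
def Heisenberg (F : Type*) [Field F] : Subgroup (GL (Fin 3) F) where
  carrier := { M | (M : Matrix (Fin 3) (Fin 3) F) 0 0 = 1 ∧
    (M : Matrix (Fin 3) (Fin 3) F) 1 1 = 1 ∧ (M : Matrix (Fin 3) (Fin 3) F) 2 2 = 1 ∧
    (M : Matrix (Fin 3) (Fin 3) F) 1 0 = 0 ∧ (M : Matrix (Fin 3) (Fin 3) F) 2 0 = 0 ∧
    (M : Matrix (Fin 3) (Fin 3) F) 2 1 = 0 }
  one_mem' := by
    simp [Set.mem_setOf_eq, Matrix.one_apply]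
  mul_mem' := by
    rintro A B ⟨hA1, hA2, hA3, hA4, hA5, hA6⟩ ⟨hB1, hB2, hB3, hB4, hB5, hB6⟩
    simp only [Set.mem_setOf_eq, Units.val_mul, Matrix.mul_apply, Fin.sum_univ_three,
      hA1, hA2, hA3, hA4, hA5, hA6, hB1, hB2, hB3, hB4, hB5, hB6]
    ring_nf
    simp [hA4, hA5, hA6, hB4, hB5, hB6]
  inv_mem' := by
    rintro A ⟨hA1, hA2, hA3, hA4, hA5, hA6⟩
    have hdet : (A : Matrix (Fin 3) (Fin 3) F).det = 1 := by
      rw [Matrix.det_fin_three]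
      simp [hA1, hA2, hA3, hA4, hA5, hA6]
    have hinv : ((A⁻¹ : GL (Fin 3) F) : Matrix (Fin 3) (Fin 3) F)
        = (A : Matrix (Fin 3) (Fin 3) F)⁻¹ := Matrix.coe_units_inv A
    simp only [Set.mem_setOf_eq, hinv, Matrix.inv_def, hdet, Matrix.adjugate_fin_three]
    simp [Matrix.vecHead, Matrix.vecTail, hA1, hA2, hA3, hA4, hA5, hA6]

/-- Two subgroups `H` and `K` of a group `G` are *conjugate* if `K = gHg⁻¹` for some
`g ∈ G`. -/
def SubgroupIsConj {G : Type*} [Group G] (H K : Subgroup G) : Prop :=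
  ∃ g : G, K = Subgroup.map (MulAut.conj g).toMonoidHom H

set_option linter.unnecessarySeqFocus false

namespace HeisAux
variable {F : Type*} [Field F]
variable {F : Type*} [Field F]

/-- matrix entry of an element of the Heisenberg group -/
def ee (x : Heisenberg F) (i j : Fin 3) : F :=
  ((x : GL (Fin 3) F) : Matrix (Fin 3) (Fin 3) F) i j

lemma mem_heis (x : Heisenberg F) :
    ee x 0 0 = 1 ∧ ee x 1 1 = 1 ∧ ee x 2 2 = 1 ∧
    ee x 1 0 = 0 ∧ ee x 2 0 = 0 ∧ ee x 2 1 = 0 := x.2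

lemma ee_mul (x y : Heisenberg F) :
    ee (x * y) 0 1 = ee x 0 1 + ee y 0 1 ∧
    ee (x * y) 1 2 = ee x 1 2 + ee y 1 2 ∧
    ee (x * y) 0 2 = ee x 0 2 + ee y 0 2 + ee x 0 1 * ee y 1 2 := by
  obtain ⟨a1, a2, a3, a4, a5, a6⟩ := mem_heis x
  obtain ⟨b1, b2, b3, b4, b5, b6⟩ := mem_heis y
  simp only [ee] at *
  refine ⟨?_, ?_, ?_⟩ <;>
  · simp only [Subgroup.coe_mul, Units.val_mul, Matrix.mul_apply, Fin.sum_univ_three,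
      a1, a2, a3, a4, a5, a6, b1, b2, b3, b4, b5, b6]
    ring

lemma ee_one : ee (1 : Heisenberg F) 0 1 = 0 ∧ ee (1 : Heisenberg F) 1 2 = 0 ∧
    ee (1 : Heisenberg F) 0 2 = 0 := by
  refine ⟨?_, ?_, ?_⟩ <;> simp [ee, Matrix.one_apply]

lemma ee_inv (x : Heisenberg F) :
    ee x⁻¹ 0 1 = - ee x 0 1 ∧ ee x⁻¹ 1 2 = - ee x 1 2 ∧
    ee x⁻¹ 0 2 = ee x 0 1 * ee x 1 2 - ee x 0 2 := by
  have h := ee_mul x x⁻¹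
  rw [mul_inv_cancel] at h
  obtain ⟨h1, h2, h3⟩ := h
  obtain ⟨o1, o2, o3⟩ := ee_one (F := F)
  rw [o1] at h1; rw [o2] at h2; rw [o3] at h3
  have e2 : ee x⁻¹ 1 2 = - ee x 1 2 := by linear_combination - h2
  refine ⟨by linear_combination - h1, e2, ?_⟩
  rw [e2] at h3
  linear_combination - h3


def MhU (a b c : F) : GL (Fin 3) F :=
  ⟨!![1, a, c; 0, 1, b; 0, 0, 1], !![1, -a, a * b - c; 0, 1, -b; 0, 0, 1],
    by ext i j; fin_cases i <;> fin_cases j <;>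
      simp [Matrix.mul_apply, Fin.sum_univ_three, Matrix.one_apply,
        Matrix.vecHead, Matrix.vecTail] <;> ring_nf,
    by ext i j; fin_cases i <;> fin_cases j <;>
      simp [Matrix.mul_apply, Fin.sum_univ_three, Matrix.one_apply,
        Matrix.vecHead, Matrix.vecTail] <;> ring_nf⟩

def Mh (a b c : F) : Heisenberg F :=
  ⟨MhU a b c, by
    refine ⟨?_, ?_, ?_, ?_, ?_, ?_⟩ <;> simp [MhU, Matrix.vecHead, Matrix.vecTail]⟩

@[simp] lemma ee_Mh01 (a b c : F) : ee (Mh a b c) 0 1 = a := by simp [ee, Mh, MhU]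
@[simp] lemma ee_Mh12 (a b c : F) : ee (Mh a b c) 1 2 = b := by simp [ee, Mh, MhU]
@[simp] lemma ee_Mh02 (a b c : F) : ee (Mh a b c) 0 2 = c := by simp [ee, Mh, MhU]

lemma Mh_eta (x : Heisenberg F) : x = Mh (ee x 0 1) (ee x 1 2) (ee x 0 2) := by
  obtain ⟨a1, a2, a3, a4, a5, a6⟩ := mem_heis x
  simp only [ee] at *
  refine Subtype.ext (Units.ext ?_)
  ext i j
  fin_cases i <;> fin_cases j <;>
    simp_all [Mh, MhU, Matrix.vecHead, Matrix.vecTail]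

lemma Mh_inj {a b c a' b' c' : F} (h : Mh a b c = Mh (F := F) a' b' c') :
    a = a' ∧ b = b' ∧ c = c' :=
  ⟨by rw [← ee_Mh01 a b c, h, ee_Mh01], by rw [← ee_Mh12 a b c, h, ee_Mh12],
   by rw [← ee_Mh02 a b c, h, ee_Mh02]⟩

lemma Mh_mul (a b c a' b' c' : F) :
    Mh a b c * Mh a' b' c' = Mh (a + a') (b + b') (c + c' + a * b') := by
  refine Subtype.ext (Units.ext ?_)
  ext i j
  fin_cases i <;> fin_cases j <;>
    simp [Mh, MhU, Matrix.mul_apply, Fin.sum_univ_three,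
      Matrix.vecHead, Matrix.vecTail] <;> ring

lemma Mh_one : Mh (0 : F) 0 0 = 1 := by
  refine Subtype.ext (Units.ext ?_)
  ext i j
  fin_cases i <;> fin_cases j <;> simp [Mh, MhU, Matrix.one_apply, Matrix.vecHead, Matrix.vecTail]

lemma Mh_inv (a b c : F) : (Mh a b c)⁻¹ = Mh (-a) (-b) (a * b - c) := by
  refine inv_eq_of_mul_eq_one_right ?_
  rw [Mh_mul]
  rw [show a + -a = 0 by ring, show b + -b = 0 by ring,
    show c + (a * b - c) + a * -b = 0 by ring, Mh_one]

lemma Mh_conj (X Y Z a b c : F) :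
    Mh X Y Z * Mh a b c * (Mh X Y Z)⁻¹ = Mh a b (c + X * b - Y * a) := by
  rw [Mh_inv, Mh_mul, Mh_mul]
  have h1 : X + a + -X = a := by ring
  have h2 : Y + b + -Y = b := by ring
  have h3 : Z + c + X * b + (X * Y - Z) + (X + a) * -Y = c + X * b - Y * a := by ring
  rw [h1, h2, h3]

lemma isConj_char (a b c a' b' c' : F) :
    IsConj (Mh a b c) (Mh (F := F) a' b' c') ↔
      a' = a ∧ b' = b ∧ (a = 0 → b = 0 → c' = c) := by
  rw [isConj_iff]
  constructor
  · rintro ⟨u, hu⟩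
    rw [Mh_eta u, Mh_conj] at hu
    obtain ⟨h1, h2, h3⟩ := Mh_inj hu
    refine ⟨h1.symm, h2.symm, fun ha hb => ?_⟩
    rw [← h3, ha, hb]; ring
  · rintro ⟨rfl, rfl, hc⟩
    by_cases hb : b' = 0
    · by_cases ha : a' = 0
      · rw [hc ha hb]; exact ⟨1, by group⟩
      · refine ⟨Mh 0 ((c - c') / a') 0, ?_⟩
        rw [Mh_conj, hb]
        have : c + 0 * 0 - (c - c') / a' * a' = c' := by field_simp; ring
        rw [this]
    · refine ⟨Mh ((c' - c) / b') 0 0, ?_⟩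
      rw [Mh_conj]
      have : c + (c' - c) / b' * b' - 0 * a' = c' := by field_simp; ring
      rw [this]

def Hsub (ψ : F →+ F) : Subgroup (Heisenberg F) where
  carrier := { x | ee x 1 2 = 0 ∧ ee x 0 2 = ψ (ee x 0 1) }
  one_mem' := by
    obtain ⟨o1, o2, o3⟩ := ee_one (F := F)
    exact ⟨o2, by rw [o3, o1, map_zero]⟩
  mul_mem' := by
    rintro x y ⟨hx1, hx2⟩ ⟨hy1, hy2⟩
    obtain ⟨m1, m2, m3⟩ := ee_mul x y
    refine ⟨by rw [m2, hx1, hy1, add_zero], ?_⟩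
    rw [m3, m1, hx2, hy2, hy1, map_add]; ring
  inv_mem' := by
    rintro x ⟨hx1, hx2⟩
    obtain ⟨i1, i2, i3⟩ := ee_inv x
    refine ⟨by rw [i2, hx1, neg_zero], ?_⟩
    rw [i3, i1, hx1, hx2, map_neg]; ring

lemma Mh_mem_Hsub (ψ : F →+ F) (a b c : F) :
    Mh a b c ∈ Hsub ψ ↔ b = 0 ∧ c = ψ a := by
  constructor
  · rintro ⟨h1, h2⟩; simp only [ee_Mh01, ee_Mh12, ee_Mh02] at h1 h2; exact ⟨h1, h2⟩
  · rintro ⟨h1, h2⟩; exact ⟨by simpa using h1, by simpa using h2⟩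

lemma mem_Hsub (ψ : F →+ F) (x : Heisenberg F) :
    x ∈ Hsub ψ ↔ ee x 1 2 = 0 ∧ ee x 0 2 = ψ (ee x 0 1) := Iff.rfl

lemma Hsub_inj : Function.Injective (Hsub (F := F)) := by
  intro ψ₁ ψ₂ h
  ext a
  have h1 : Mh a 0 (ψ₁ a) ∈ Hsub ψ₁ := (Mh_mem_Hsub ψ₁ a 0 (ψ₁ a)).mpr ⟨rfl, rfl⟩
  rw [h, Mh_mem_Hsub] at h1
  exact h1.2

noncomputable def HsubEquiv (ψ : F →+ F) : (Hsub ψ) ≃ F where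
  toFun x := ee x.1 0 1
  invFun a := ⟨Mh a 0 (ψ a), (Mh_mem_Hsub ψ a 0 (ψ a)).mpr ⟨rfl, rfl⟩⟩
  left_inv := by
    rintro ⟨x, hx1, hx2⟩
    refine Subtype.ext ?_
    simp only
    conv_rhs => rw [Mh_eta x]
    rw [hx1, hx2]
  right_inv a := by simp

lemma card_Hsub (ψ : F →+ F) : Nat.card (Hsub ψ) = Nat.card F :=
  Nat.card_congr (HsubEquiv ψ)

lemma almostConj_Hsub (ψ₁ ψ₂ : F →+ F) : IsAlmostConjugate (Hsub ψ₁) (Hsub ψ₂) := by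
  have key : ∀ (ψ ψ' : F →+ F) (g x : Heisenberg F), x ∈ Hsub ψ → IsConj g x →
      Mh (ee x 0 1) 0 (ψ' (ee x 0 1)) ∈ Hsub ψ' ∧
        IsConj g (Mh (ee x 0 1) 0 (ψ' (ee x 0 1))) := by
    rintro ψ ψ' g x ⟨hx1, hx2⟩ hcj
    refine ⟨(Mh_mem_Hsub ψ' _ _ _).mpr ⟨rfl, rfl⟩, ?_⟩
    rw [Mh_eta g, Mh_eta x, isConj_char] at hcj
    obtain ⟨h1, h2, h3⟩ := hcj
    rw [Mh_eta g, isConj_char]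
    refine ⟨h1, by rw [← h2, hx1], fun ha hb => ?_⟩
    have hx01 : ee x 0 1 = 0 := by rw [h1, ha]
    rw [hx01, map_zero]
    rw [← h3 ha hb, hx2, hx01, map_zero]
  intro g
  refine Nat.card_congr ?_
  refine ⟨fun x => ⟨Mh (ee x.1 0 1) 0 (ψ₂ (ee x.1 0 1)), key ψ₁ ψ₂ g x.1 x.2.1 x.2.2⟩,
    fun x => ⟨Mh (ee x.1 0 1) 0 (ψ₁ (ee x.1 0 1)), key ψ₂ ψ₁ g x.1 x.2.1 x.2.2⟩, ?_, ?_⟩ <;>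
  · rintro ⟨x, ⟨hx1, hx2⟩, hcj⟩
    refine Subtype.ext ?_
    simp only [ee_Mh01]
    conv_rhs => rw [Mh_eta x]
    rw [hx1, hx2]

lemma notConj_Hsub {ψ₁ ψ₂ : F →+ F} (h1 : ψ₁ 1 = 0) (h2 : ψ₂ 1 = 0)
    (hne : Hsub ψ₁ ≠ Hsub (F := F) ψ₂) : ¬ SubgroupIsConj (Hsub ψ₁) (Hsub ψ₂) := by
  rintro ⟨h, hmap⟩
  apply hne
  apply congrArg Hsub
  have key : ∀ a : F, ψ₂ a = ψ₁ a + ee h 0 1 * 0 - ee h 1 2 * a := by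
    intro a
    have hm : Mh a 0 (ψ₁ a) ∈ Hsub ψ₁ := (Mh_mem_Hsub ψ₁ a 0 (ψ₁ a)).mpr ⟨rfl, rfl⟩
    have hm2 : (MulAut.conj h).toMonoidHom (Mh a 0 (ψ₁ a)) ∈ Hsub ψ₂ := by
      rw [hmap]; exact Subgroup.mem_map_of_mem _ hm
    have hconj : (MulAut.conj h).toMonoidHom (Mh a 0 (ψ₁ a)) =
        Mh a 0 (ψ₁ a + ee h 0 1 * 0 - ee h 1 2 * a) := by
      have : (MulAut.conj h).toMonoidHom (Mh a 0 (ψ₁ a)) = h * Mh a 0 (ψ₁ a) * h⁻¹ := rfl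
      rw [this]
      conv_lhs => rw [Mh_eta h]
      rw [Mh_conj]
    rw [hconj, Mh_mem_Hsub] at hm2
    exact hm2.2.symm
  have hY : ee h 1 2 = 0 := by
    have := key 1
    rw [h1, h2] at this
    linear_combination this
  ext a
  rw [key a, hY]
  ring

lemma card_addMonoidHom_ker (p n : ℕ) (hp : p.Prime) (hn : 0 < n)
    (F : Type*) [Field F] [Fintype F] (hq : Fintype.card F = p ^ n) :
    Nat.card {ψ : F →+ F // ψ 1 = 0} = p ^ (n * (n - 1)) := by
  haveI : Fact p.Prime := ⟨hp⟩
  -- identify the characteristic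
  have hchar : CharP F p := by
    obtain ⟨m, hr, hcard⟩ := FiniteField.card F (ringChar F)
    rw [hq] at hcard
    have hdvd : p ∣ ringChar F := by
      refine hp.dvd_of_dvd_pow (n := (m : ℕ)) ?_
      rw [← hcard]
      exact dvd_pow_self p hn.ne'
    have : p = ringChar F := ((Nat.prime_dvd_prime_iff_eq hp hr).mp hdvd)
    rw [this]; exact ringChar.charP F
  haveI := hchar
  haveI : Algebra (ZMod p) F := ZMod.algebra F p
  -- the total count of additive maps
  have hn2 : Module.finrank (ZMod p) F = n := by
    have := Module.card_eq_pow_finrank (K := ZMod p) (V := F)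
    rw [ZMod.card, hq] at this
    exact (Nat.pow_right_injective hp.two_le this.symm)
  have htot : Nat.card (F →+ F) = p ^ (n * n) := by
    have e1 : (F →+ F) ≃ (F →ₗ[ZMod p] F) :=
      { toFun := fun f => f.toZModLinearMap p
        invFun := fun f => f.toAddMonoidHom
        left_inv := fun f => rfl
        right_inv := fun f => rfl }
    let b := Module.finBasis (ZMod p) F
    have e2 : (F →ₗ[ZMod p] F) ≃ (Fin (Module.finrank (ZMod p) F) → F) :=
      (b.constr (ZMod p)).toEquiv.symm
    rw [Nat.card_congr (e1.trans e2)]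
    simp [hn2, Nat.card_eq_fintype_card, hq, ← pow_mul]
  -- the evaluation map at 1
  let ev : (F →+ F) →+ F := AddMonoidHom.mk' (fun ψ => ψ 1) (fun _ _ => rfl)
  have hsurj : Function.Surjective ev := by
    intro y
    exact ⟨AddMonoidHom.mulRight y, one_mul y⟩
  have hker : Nat.card {ψ : F →+ F // ψ 1 = 0} = Nat.card ev.ker := by
    apply Nat.card_congr
    exact Equiv.subtypeEquivRight (fun ψ => Iff.rfl)
  have hquot : Nat.card (F →+ F) = Nat.card ((F →+ F) ⧸ ev.ker) * Nat.card ev.ker :=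
    AddSubgroup.card_eq_card_quotient_mul_card_addSubgroup ev.ker
  have hquot2 : Nat.card ((F →+ F) ⧸ ev.ker) = p ^ n := by
    rw [Nat.card_congr (QuotientAddGroup.quotientKerEquivOfSurjective ev hsurj).toEquiv]
    rw [Nat.card_eq_fintype_card, hq]
  rw [hker]
  have hpn : (0 : ℕ) < p ^ n := pow_pos hp.pos n
  have : p ^ (n * n) = p ^ n * Nat.card ev.ker := by
    rw [← htot, hquot, hquot2]
  have hsplit : p ^ (n * n) = p ^ n * p ^ (n * (n - 1)) := by
    rw [← pow_add]
    congr 1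
    cases n with
    | zero => omega
    | succ k => simp only [Nat.succ_sub_one]; ring
  exact Nat.eq_of_mul_eq_mul_left hpn (this.symm.trans hsplit)

end HeisAux

/-- For a prime power `q = pⁿ`, the Heisenberg group `H(𝔽_q)` contains a family of at
least `p^(n(n-1))` subgroups, each of order `q`, which are pairwise almost conjugate
and pairwise nonconjugate in `H(𝔽_q)`. -/
theorem heisenberg_almost_conjugate_family (p n : ℕ) (hp : p.Prime) (hn : 0 < n)
    (F : Type*) [Field F] [Fintype F] (hq : Fintype.card F = p ^ n) :
    ∃ 𝒮 : Finset (Subgroup (Heisenberg F)),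
      p ^ (n * (n - 1)) ≤ 𝒮.card ∧
      (∀ H ∈ 𝒮, Nat.card H = p ^ n) ∧
      (∀ H₁ ∈ 𝒮, ∀ H₂ ∈ 𝒮, IsAlmostConjugate H₁ H₂) ∧
      (∀ H₁ ∈ 𝒮, ∀ H₂ ∈ 𝒮, H₁ ≠ H₂ → ¬ SubgroupIsConj H₁ H₂) := by
  classical
  haveI : Finite (F →+ F) :=
    Finite.of_injective (fun f => (f : F → F)) DFunLike.coe_injective
  haveI : Fintype {ψ : F →+ F // ψ 1 = 0} := Fintype.ofFinite _
  refine ⟨(Finset.univ : Finset {ψ : F →+ F // ψ 1 = 0}).image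
    (fun ψ => HeisAux.Hsub ψ.1), ?_, ?_, ?_, ?_⟩
  · rw [Finset.card_image_of_injective _
      (fun a b h => Subtype.ext (HeisAux.Hsub_inj h)), Finset.card_univ,
      ← Nat.card_eq_fintype_card, HeisAux.card_addMonoidHom_ker p n hp hn F hq]
  · intro H hH
    obtain ⟨ψ, _, rfl⟩ := Finset.mem_image.mp hH
    rw [HeisAux.card_Hsub, Nat.card_eq_fintype_card, hq]
  · intro H₁ h₁ H₂ h₂
    obtain ⟨ψ₁, _, rfl⟩ := Finset.mem_image.mp h₁
    obtain ⟨ψ₂, _, rfl⟩ := Finset.mem_image.mp h₂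
    exact HeisAux.almostConj_Hsub ψ₁.1 ψ₂.1
  · intro H₁ h₁ H₂ h₂ hne
    obtain ⟨ψ₁, _, rfl⟩ := Finset.mem_image.mp h₁
    obtain ⟨ψ₂, _, rfl⟩ := Finset.mem_image.mp h₂
    exact HeisAux.notConj_Hsub ψ₁.2 ψ₂.2 hne
end

section
/- Let q₁ = p₁^{n₁}, …, q_r = p_r^{n_r} be prime powers and set G = H(𝔽_{q₁}) × ⋯ × H(𝔽_{q_r}). Then G contains at least p₁^{n₁(n₁−1)} ⋯ p_r^{n_r(n_r−1)} subgroups of order q₁⋯q_r which are pairwise almost conjugate and pairwise nonconjugate in G. -/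
open Matrix

section HeisBasic
variable {F : Type*} [Field F]

def heisMat (a b c : F) : Matrix (Fin 3) (Fin 3) F := !![1, a, c; 0, 1, b; 0, 0, 1]

lemma heisMat_mul (a b c a' b' c' : F) :
    heisMat a b c * heisMat a' b' c' = heisMat (a + a') (b + b') (c + c' + a * b') := by
  ext i j
  fin_cases i <;> fin_cases j <;>
    simp [heisMat, Matrix.mul_apply, Fin.sum_univ_three, Matrix.vecHead, Matrix.vecTail] <;> ring

lemma heisMat_zero : (heisMat (0:F) 0 0) = 1 := by
  ext i j
  fin_cases i <;> fin_cases j <;> simp [heisMat, Matrix.one_apply, Matrix.vecHead, Matrix.vecTail]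

def heisUnit (a b c : F) : GL (Fin 3) F :=
  ⟨heisMat a b c, heisMat (-a) (-b) (a * b - c),
    by rw [heisMat_mul]; ring_nf; exact heisMat_zero,
    by rw [heisMat_mul]; ring_nf; exact heisMat_zero⟩

@[simp] lemma heisUnit_coe (a b c : F) :
    ((heisUnit a b c : GL (Fin 3) F) : Matrix (Fin 3) (Fin 3) F) = heisMat a b c := rfl

lemma heisUnit_mul (a b c a' b' c' : F) :
    heisUnit a b c * heisUnit a' b' c' = heisUnit (a + a') (b + b') (c + c' + a * b') := by
  ext : 1
  exact heisMat_mul a b c a' b' c'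

lemma heisUnit_inv (a b c : F) :
    (heisUnit a b c)⁻¹ = heisUnit (-a) (-b) (a * b - c) := by
  ext : 1
  rfl

lemma heisUnit_mem (a b c : F) : heisUnit a b c ∈ Heisenberg F := by
  refine ⟨?_, ?_, ?_, ?_, ?_, ?_⟩ <;> simp [heisMat, Matrix.vecHead, Matrix.vecTail]

/-- Element of the Heisenberg group from parameters. -/
def hMk (a b c : F) : Heisenberg F := ⟨heisUnit a b c, heisUnit_mem a b c⟩

/-- entry extraction -/
def hA (M : Heisenberg F) : F := ((M : GL (Fin 3) F) : Matrix (Fin 3) (Fin 3) F) 0 1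
def hB (M : Heisenberg F) : F := ((M : GL (Fin 3) F) : Matrix (Fin 3) (Fin 3) F) 1 2
def hC (M : Heisenberg F) : F := ((M : GL (Fin 3) F) : Matrix (Fin 3) (Fin 3) F) 0 2

@[simp] lemma hA_mk (a b c : F) : hA (hMk a b c) = a := by simp [hA, hMk, heisMat]
@[simp] lemma hB_mk (a b c : F) : hB (hMk a b c) = b := by simp [hB, hMk, heisMat]
@[simp] lemma hC_mk (a b c : F) : hC (hMk a b c) = c := by simp [hC, hMk, heisMat]

lemma heis_eq_mk (M : Heisenberg F) : M = hMk (hA M) (hB M) (hC M) := by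
  obtain ⟨h1, h2, h3, h4, h5, h6⟩ := M.2
  apply Subtype.ext
  apply Units.ext
  ext i j
  fin_cases i <;> fin_cases j <;>
    simp_all [hMk, hA, hB, hC, heisMat, Matrix.vecHead, Matrix.vecTail]

lemma hMk_mul (a b c a' b' c' : F) :
    hMk a b c * hMk a' b' c' = hMk (a + a') (b + b') (c + c' + a * b') := by
  apply Subtype.ext
  exact heisUnit_mul a b c a' b' c'

lemma hMk_inv (a b c : F) : (hMk a b c)⁻¹ = hMk (-a) (-b) (a * b - c) := by
  apply Subtype.ext
  exact heisUnit_inv a b c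

lemma hMk_injective : Function.Injective (fun p : F × F × F => hMk p.1 p.2.1 p.2.2) := by
  rintro ⟨a, b, c⟩ ⟨a', b', c'⟩ h
  simp only at h
  have h1 := congrArg hA h
  have h2 := congrArg hB h
  have h3 := congrArg hC h
  simp at h1 h2 h3
  simp [h1, h2, h3]

@[simp] lemma hA_mul (M N : Heisenberg F) : hA (M * N) = hA M + hA N := by
  conv_lhs => rw [heis_eq_mk M, heis_eq_mk N, hMk_mul]
  simp

@[simp] lemma hB_mul (M N : Heisenberg F) : hB (M * N) = hB M + hB N := by
  conv_lhs => rw [heis_eq_mk M, heis_eq_mk N, hMk_mul]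
  simp

lemma hC_mul (M N : Heisenberg F) : hC (M * N) = hC M + hC N + hA M * hB N := by
  conv_lhs => rw [heis_eq_mk M, heis_eq_mk N, hMk_mul]
  simp

@[simp] lemma hA_inv (M : Heisenberg F) : hA M⁻¹ = -hA M := by
  conv_lhs => rw [heis_eq_mk M, hMk_inv]
  simp

@[simp] lemma hB_inv (M : Heisenberg F) : hB M⁻¹ = -hB M := by
  conv_lhs => rw [heis_eq_mk M, hMk_inv]
  simp

lemma hC_inv (M : Heisenberg F) : hC M⁻¹ = hA M * hB M - hC M := by
  conv_lhs => rw [heis_eq_mk M, hMk_inv]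
  simp

@[simp] lemma hA_one : hA (1 : Heisenberg F) = 0 := by
  have : (1 : Heisenberg F) = hMk 0 0 0 := by
    apply Subtype.ext; apply Units.ext; exact heisMat_zero.symm
  rw [this]; simp

@[simp] lemma hB_one : hB (1 : Heisenberg F) = 0 := by
  have : (1 : Heisenberg F) = hMk 0 0 0 := by
    apply Subtype.ext; apply Units.ext; exact heisMat_zero.symm
  rw [this]; simp

@[simp] lemma hC_one : hC (1 : Heisenberg F) = 0 := by
  have : (1 : Heisenberg F) = hMk 0 0 0 := by
    apply Subtype.ext; apply Units.ext; exact heisMat_zero.symm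
  rw [this]; simp

/-- conjugation formulas -/
lemma hA_conj (g M : Heisenberg F) : hA (g * M * g⁻¹) = hA M := by
  simp
lemma hB_conj (g M : Heisenberg F) : hB (g * M * g⁻¹) = hB M := by
  simp
lemma hC_conj (g M : Heisenberg F) :
    hC (g * M * g⁻¹) = hC M + hA g * hB M - hA M * hB g := by
  simp [hC_mul, hC_inv]; ring

end HeisBasic

section HeisSub
variable {F : Type*} [Field F]

/-- The subgroup `{(a, 0, φ a)}` of the Heisenberg group, for `φ : F →+ F`. -/
def heisSub (φ : F →+ F) : Subgroup (Heisenberg F) where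
  carrier := { M | hB M = 0 ∧ hC M = φ (hA M) }
  one_mem' := by simp
  mul_mem' := by
    rintro M N ⟨hM1, hM2⟩ ⟨hN1, hN2⟩
    refine ⟨by simp [hM1, hN1], ?_⟩
    simp [hC_mul, hM1, hN1, hM2, hN2, map_add]
  inv_mem' := by
    rintro M ⟨hM1, hM2⟩
    refine ⟨by simp [hM1], ?_⟩
    simp [hC_inv, hM1, hM2]

lemma mem_heisSub {φ : F →+ F} {M : Heisenberg F} :
    M ∈ heisSub φ ↔ hB M = 0 ∧ hC M = φ (hA M) := Iff.rfl

lemma hMk_mem_heisSub (φ : F →+ F) (a : F) : hMk a 0 (φ a) ∈ heisSub φ := by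
  constructor <;> simp

lemma heisSub_injective : Function.Injective (heisSub (F := F)) := by
  intro φ ψ h
  ext a
  have := (h ▸ hMk_mem_heisSub φ a).2
  simpa using this

/-- elements of `heisSub φ` and `heisSub ψ` with the same `a`-entry are conjugate. -/
lemma isConj_heisSub_elts (φ ψ : F →+ F) (a : F) :
    IsConj (hMk a 0 (φ a) : Heisenberg F) (hMk a 0 (ψ a)) := by
  rcases eq_or_ne a 0 with rfl | ha
  · simp only [map_zero]
    exact IsConj.refl _
  · rw [isConj_iff]
    refine ⟨hMk 0 ((φ a - ψ a) / a) 0, ?_⟩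
    set g := hMk 0 ((φ a - ψ a) / a) 0
    have h1 : hA (g * hMk a 0 (φ a) * g⁻¹) = a := by rw [hA_conj]; simp
    have h2 : hB (g * hMk a 0 (φ a) * g⁻¹) = 0 := by rw [hB_conj]; simp
    have h3 : hC (g * hMk a 0 (φ a) * g⁻¹) = ψ a := by
      rw [hC_conj]
      simp only [hA_mk, hB_mk, hC_mk, g]
      field_simp
      ring
    rw [heis_eq_mk (g * hMk a 0 (φ a) * g⁻¹), h1, h2, h3]

/-- key counting equivalence: intersection with a conjugacy class. -/
noncomputable def heisSubConjEquiv (φ ψ : F →+ F) (g : Heisenberg F) :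
    {x : Heisenberg F // x ∈ heisSub φ ∧ IsConj g x} ≃
    {x : Heisenberg F // x ∈ heisSub ψ ∧ IsConj g x} where
  toFun x := ⟨hMk (hA x.1) 0 (ψ (hA x.1)), hMk_mem_heisSub ψ _, by
    have hx : (x : Heisenberg F) = hMk (hA x.1) 0 (φ (hA x.1)) := by
      obtain ⟨⟨h1, h2⟩, _⟩ := x.2
      conv_lhs => rw [heis_eq_mk x.1]
      rw [h1, h2]
    exact x.2.2.trans (hx ▸ isConj_heisSub_elts φ ψ (hA x.1))⟩
  invFun x := ⟨hMk (hA x.1) 0 (φ (hA x.1)), hMk_mem_heisSub φ _, by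
    have hx : (x : Heisenberg F) = hMk (hA x.1) 0 (ψ (hA x.1)) := by
      obtain ⟨⟨h1, h2⟩, _⟩ := x.2
      conv_lhs => rw [heis_eq_mk x.1]
      rw [h1, h2]
    exact x.2.2.trans (hx ▸ isConj_heisSub_elts ψ φ (hA x.1))⟩
  left_inv x := by
    obtain ⟨⟨h1, h2⟩, _⟩ := x.2
    apply Subtype.ext
    simp only [hA_mk]
    conv_rhs => rw [heis_eq_mk x.1, h1, h2]
  right_inv x := by
    obtain ⟨⟨h1, h2⟩, _⟩ := x.2
    apply Subtype.ext
    simp only [hA_mk]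
    conv_rhs => rw [heis_eq_mk x.1, h1, h2]

lemma heisSub_card_conj (φ ψ : F →+ F) (g : Heisenberg F) :
    Nat.card {x : Heisenberg F // x ∈ heisSub φ ∧ IsConj g x} =
    Nat.card {x : Heisenberg F // x ∈ heisSub ψ ∧ IsConj g x} :=
  Nat.card_congr (heisSubConjEquiv φ ψ g)

/-- `heisSub φ ≃ F`. -/
noncomputable def heisSubEquiv (φ : F →+ F) : (heisSub φ) ≃ F where
  toFun x := hA x.1
  invFun a := ⟨hMk a 0 (φ a), hMk_mem_heisSub φ a⟩
  left_inv x := by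
    obtain ⟨h1, h2⟩ := x.2
    apply Subtype.ext
    conv_rhs => rw [heis_eq_mk x.1, h1, h2]
  right_inv a := by simp

lemma heisSub_card (φ : F →+ F) : Nat.card (heisSub φ) = Nat.card F :=
  Nat.card_congr (heisSubEquiv φ)

/-- if a conjugate of `heisSub φ` equals `heisSub ψ`, then `φ - ψ` is left multiplication. -/
lemma heisSub_conj_classify (φ ψ : F →+ F) (g : Heisenberg F)
    (h : Subgroup.map (MulAut.conj g).toMonoidHom (heisSub φ) = heisSub ψ) :
    ∀ a : F, φ a - ψ a = hB g * a := by
  intro a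
  have hmem : hMk a 0 (ψ a) ∈ Subgroup.map (MulAut.conj g).toMonoidHom (heisSub φ) :=
    h ▸ hMk_mem_heisSub ψ a
  obtain ⟨x, ⟨hx1, hx2⟩, hx⟩ := hmem
  have hconj : (MulAut.conj g).toMonoidHom x = g * x * g⁻¹ := rfl
  rw [hconj] at hx
  have ha : hA x = a := by
    have := congrArg hA hx
    rwa [hA_conj, hA_mk] at this
  have hc := congrArg hC hx
  rw [hC_conj, hC_mk, hx1, hx2, ha] at hc
  -- hc : φ a + hA g * 0 - a * hB g = ψ a
  rw [mul_zero, add_zero] at hc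
  linear_combination hc

end HeisSub

section PiLemmas
variable {r : ℕ} {G : Fin r → Type*} [∀ i, Group (G i)]

lemma isConj_pi {g x : ∀ i, G i} : IsConj g x ↔ ∀ i, IsConj (g i) (x i) := by
  constructor
  · rw [isConj_iff]
    rintro ⟨c, hc⟩ i
    rw [isConj_iff]
    exact ⟨c i, congrFun hc i⟩
  · intro h
    choose c hc using fun i => isConj_iff.mp (h i)
    rw [isConj_iff]
    exact ⟨c, funext hc⟩

noncomputable def piConjEquiv (H : ∀ i, Subgroup (G i)) (g : ∀ i, G i) :
    {x : ∀ i, G i // x ∈ Subgroup.pi Set.univ H ∧ IsConj g x} ≃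
    ∀ i, {y : G i // y ∈ H i ∧ IsConj (g i) y} where
  toFun x i := ⟨x.1 i, x.2.1 i (Set.mem_univ i), isConj_pi.mp x.2.2 i⟩
  invFun y := ⟨fun i => (y i).1, fun i _ => (y i).2.1, isConj_pi.mpr fun i => (y i).2.2⟩
  left_inv x := rfl
  right_inv y := rfl

lemma card_pi_conj (H : ∀ i, Subgroup (G i)) (g : ∀ i, G i) :
    Nat.card {x : ∀ i, G i // x ∈ Subgroup.pi Set.univ H ∧ IsConj g x} =
    ∏ i, Nat.card {y : G i // y ∈ H i ∧ IsConj (g i) y} := by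
  rw [Nat.card_congr (piConjEquiv H g), Nat.card_pi]

noncomputable def piSubgroupEquiv (H : ∀ i, Subgroup (G i)) :
    (Subgroup.pi Set.univ H) ≃ ∀ i, H i where
  toFun x i := ⟨x.1 i, x.2 i (Set.mem_univ i)⟩
  invFun y := ⟨fun i => (y i).1, fun i _ => (y i).2⟩
  left_inv x := rfl
  right_inv y := rfl

lemma card_pi_subgroup (H : ∀ i, Subgroup (G i)) :
    Nat.card (Subgroup.pi Set.univ H) = ∏ i, Nat.card (H i) := by
  rw [Nat.card_congr (piSubgroupEquiv H), Nat.card_pi]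

lemma map_conj_pi (H : ∀ i, Subgroup (G i)) (g : ∀ i, G i) :
    Subgroup.map (MulAut.conj g).toMonoidHom (Subgroup.pi Set.univ H) =
    Subgroup.pi Set.univ (fun i => Subgroup.map (MulAut.conj (g i)).toMonoidHom (H i)) := by
  ext x
  constructor
  · rintro ⟨y, hy, rfl⟩
    intro i _
    exact ⟨y i, hy i (Set.mem_univ i), rfl⟩
  · intro hx
    choose y hy hxy using fun i => hx i (Set.mem_univ i)
    exact ⟨y, fun i _ => hy i, funext hxy⟩

lemma pi_subgroup_eq_iff (A B : ∀ i, Subgroup (G i)) :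
    Subgroup.pi Set.univ A = Subgroup.pi Set.univ B ↔ ∀ i, A i = B i := by
  constructor
  · intro h i
    ext x
    constructor
    · intro hx
      have : Pi.mulSingle i x ∈ Subgroup.pi Set.univ A := by
        intro j _
        rcases eq_or_ne j i with rfl | hj
        · simpa using hx
        · rw [Pi.mulSingle_eq_of_ne hj]; exact (A j).one_mem
      have := h ▸ this
      simpa using this i (Set.mem_univ i)
    · intro hx
      have : Pi.mulSingle i x ∈ Subgroup.pi Set.univ B := by
        intro j _
        rcases eq_or_ne j i with rfl | hj
        · simpa using hx
        · rw [Pi.mulSingle_eq_of_ne hj]; exact (B j).one_mem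
      have := h ▸ this
      simpa using this i (Set.mem_univ i)
  · intro h
    rw [funext h]

end PiLemmas

section CardHom
variable {F : Type*} [Field F] [Fintype F]

lemma charP_of_card {p n : ℕ} (hp : p.Prime) (hn : 0 < n)
    (hF : Fintype.card F = p ^ n) : CharP F p := by
  haveI : CharP F (ringChar F) := ringChar.charP F
  have hp' : (ringChar F).Prime := CharP.char_is_prime F (ringChar F)
  obtain ⟨m, _, hcard⟩ := FiniteField.card F (ringChar F)
  have : p = ringChar F := by
    have hdvd : p ∣ ringChar F ^ (m : ℕ) := by
      rw [← hcard, hF]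
      exact dvd_pow_self p hn.ne'
    exact ((Nat.prime_dvd_prime_iff_eq hp hp').mp (hp.dvd_of_dvd_pow hdvd))
  rw [this]
  exact ringChar.charP F

lemma card_addMonoidHom {p n : ℕ} (hp : p.Prime) (hn : 0 < n)
    (hF : Fintype.card F = p ^ n) : Nat.card (F →+ F) = p ^ (n * n) := by
  haveI : CharP F p := charP_of_card hp hn hF
  haveI : Fact p.Prime := ⟨hp⟩
  letI : Algebra (ZMod p) F := ZMod.algebra F p
  have hrank : Module.finrank (ZMod p) F = n := by
    have h1 : Fintype.card F = Fintype.card (ZMod p) ^ Module.finrank (ZMod p) F :=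
      Module.card_eq_pow_finrank
    rw [ZMod.card, hF] at h1
    exact (Nat.pow_right_injective hp.two_le h1.symm)
  have e1 : (F →+ F) ≃ (F →ₗ[ZMod p] F) :=
    { toFun := fun f => f.toZModLinearMap p
      invFun := fun g => g.toAddMonoidHom
      left_inv := fun f => by ext x; rfl
      right_inv := fun g => by ext x; rfl }
  let b := Module.finBasis (ZMod p) F
  have e2 : (F →ₗ[ZMod p] F) ≃ Matrix (Fin (Module.finrank (ZMod p) F))
      (Fin (Module.finrank (ZMod p) F)) (ZMod p) := (LinearMap.toMatrix b b).toEquiv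
  rw [Nat.card_congr e1, Nat.card_congr e2, hrank]
  have : Nat.card (Matrix (Fin n) (Fin n) (ZMod p)) = Nat.card (Fin n → Fin n → ZMod p) := rfl
  rw [this, Nat.card_fun, Nat.card_fun, Nat.card_eq_fintype_card (α := ZMod p), ZMod.card,
    Nat.card_eq_fintype_card (α := Fin n), Fintype.card_fin, ← pow_mul]

lemma card_mulRange : Nat.card (AddMonoidHom.mul (R := F)).range = Fintype.card F := by
  have hinj : Function.Injective (AddMonoidHom.mul (R := F)) := by
    intro a b h
    have := congrArg (fun f : F →+ F => f 1) h
    simpa using this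
  have : (AddMonoidHom.mul (R := F)).range ≃ F :=
    (Equiv.ofInjective _ hinj).symm
  rw [Nat.card_congr this, Nat.card_eq_fintype_card]

end CardHom

lemma card_pi_addSubgroup {r : ℕ} {A : Fin r → Type*} [∀ i, AddGroup (A i)]
    (K : ∀ i, AddSubgroup (A i)) :
    Nat.card (AddSubgroup.pi Set.univ K) = ∏ i, Nat.card (K i) := by
  have e : (AddSubgroup.pi Set.univ K) ≃ ∀ i, K i :=
    { toFun := fun x i => ⟨x.1 i, x.2 i (Set.mem_univ i)⟩
      invFun := fun y => ⟨fun i => (y i).1, fun i _ => (y i).2⟩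
      left_inv := fun x => rfl
      right_inv := fun y => rfl }
  rw [Nat.card_congr e, Nat.card_pi]


/-- For prime powers `q₁ = p₁^{n₁}, …, q_r = p_r^{n_r}`, the direct product
`G = H(𝔽_{q₁}) × ⋯ × H(𝔽_{q_r})` of Heisenberg groups contains at least
`p₁^{n₁(n₁-1)} ⋯ p_r^{n_r(n_r-1)}` subgroups of order `q₁ ⋯ q_r` which are pairwise
almost conjugate and pairwise nonconjugate in `G`. -/
theorem heisenberg_prod_almost_conjugate_family (r : ℕ) (p n : Fin r → ℕ)
    (hp : ∀ i, (p i).Prime) (hn : ∀ i, 0 < n i)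
    (F : Fin r → Type*) [∀ i, Field (F i)] [∀ i, Fintype (F i)]
    (hq : ∀ i, Fintype.card (F i) = p i ^ n i) :
    ∃ 𝒮 : Finset (Subgroup ((i : Fin r) → Heisenberg (F i))),
      (∏ i, p i ^ (n i * (n i - 1))) ≤ 𝒮.card ∧
      (∀ H ∈ 𝒮, Nat.card H = ∏ i, p i ^ n i) ∧
      (∀ H₁ ∈ 𝒮, ∀ H₂ ∈ 𝒮, IsAlmostConjugate H₁ H₂) ∧
      (∀ H₁ ∈ 𝒮, ∀ H₂ ∈ 𝒮, H₁ ≠ H₂ → ¬ SubgroupIsConj H₁ H₂) := by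
  classical
  haveI hfin : ∀ i, Finite (F i →+ F i) := fun i =>
    Finite.of_injective _ (DFunLike.coe_injective (F := F i →+ F i))
  set K : AddSubgroup (∀ i, F i →+ F i) :=
    AddSubgroup.pi Set.univ (fun i => (AddMonoidHom.mul (R := F i)).range) with hK
  haveI : Finite ((∀ i, F i →+ F i) ⧸ K) := Quotient.finite _
  haveI : Fintype ((∀ i, F i →+ F i) ⧸ K) := Fintype.ofFinite _
  set S : (∀ i, F i →+ F i) → Subgroup (∀ i, Heisenberg (F i)) :=
    fun φ => Subgroup.pi Set.univ (fun i => heisSub (φ i)) with hS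
  have hSinj : Function.Injective S := by
    intro φ ψ h
    funext i
    exact heisSub_injective ((pi_subgroup_eq_iff _ _).mp h i)
  refine ⟨Finset.image (fun q : (∀ i, F i →+ F i) ⧸ K => S (Quotient.out q)) Finset.univ, ?_, ?_, ?_, ?_⟩
  · -- cardinality bound
    have hinj2 : Function.Injective (fun q : (∀ i, F i →+ F i) ⧸ K => S (Quotient.out q)) := by
      intro q₁ q₂ h
      have := hSinj h
      rw [← QuotientAddGroup.out_eq' q₁, ← QuotientAddGroup.out_eq' q₂]
      exact congrArg _ this
    rw [Finset.card_image_of_injective _ hinj2, Finset.card_univ,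
      ← Nat.card_eq_fintype_card]
    -- compute Nat.card of the quotient
    have hE : Nat.card (∀ i, F i →+ F i) = ∏ i, p i ^ (n i * n i) := by
      rw [Nat.card_pi]
      exact Finset.prod_congr rfl fun i _ => card_addMonoidHom (hp i) (hn i) (hq i)
    have hKcard : Nat.card K = ∏ i, p i ^ n i := by
      rw [hK, card_pi_addSubgroup]
      exact Finset.prod_congr rfl fun i _ => by rw [card_mulRange, hq i]
    have hquot := AddSubgroup.card_eq_card_quotient_mul_card_addSubgroup K
    rw [hE, hKcard] at hquot
    have hid : (∏ i, p i ^ (n i * (n i - 1))) * (∏ i, p i ^ n i)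
        = ∏ i, p i ^ (n i * n i) := by
      rw [← Finset.prod_mul_distrib]
      refine Finset.prod_congr rfl fun i _ => ?_
      rw [← pow_add]
      congr 1
      have := Nat.sub_add_cancel (hn i)
      calc n i * (n i - 1) + n i = n i * (n i - 1 + 1) := by ring
        _ = n i * n i := by rw [this]
    have hpos : 0 < ∏ i, p i ^ n i :=
      Finset.prod_pos fun i _ => pow_pos (hp i).pos _
    have : Nat.card ((∀ i, F i →+ F i) ⧸ K) = ∏ i, p i ^ (n i * (n i - 1)) := by
      apply Nat.eq_of_mul_eq_mul_right hpos
      rw [← hquot, hid]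
    omega
  · -- order of subgroups
    intro H hH
    obtain ⟨q, -, rfl⟩ := Finset.mem_image.mp hH
    rw [hS]
    rw [card_pi_subgroup]
    refine Finset.prod_congr rfl fun i _ => ?_
    rw [heisSub_card, Nat.card_eq_fintype_card, hq i]
  · -- almost conjugate
    intro H₁ h₁ H₂ h₂
    obtain ⟨q₁, -, rfl⟩ := Finset.mem_image.mp h₁
    obtain ⟨q₂, -, rfl⟩ := Finset.mem_image.mp h₂
    intro g
    rw [hS]
    rw [card_pi_conj, card_pi_conj]
    exact Finset.prod_congr rfl fun i _ => heisSub_card_conj _ _ (g i)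
  · -- pairwise nonconjugate
    rintro H₁ h₁ H₂ h₂ hne ⟨g, hg⟩
    obtain ⟨q₁, -, rfl⟩ := Finset.mem_image.mp h₁
    obtain ⟨q₂, -, rfl⟩ := Finset.mem_image.mp h₂
    rw [hS, map_conj_pi] at hg
    have hcomp := (pi_subgroup_eq_iff _ _).mp hg
    have hmem : Quotient.out q₁ - Quotient.out q₂ ∈ K := by
      intro i _
      refine ⟨hB (g i), ?_⟩
      ext a
      have := heisSub_conj_classify (Quotient.out q₁ i) (Quotient.out q₂ i) (g i) (hcomp i).symm a
      simpa [AddMonoidHom.mul_apply] using this.symm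
    have : q₁ = q₂ := by
      rw [← QuotientAddGroup.out_eq' q₁, ← QuotientAddGroup.out_eq' q₂]
      rw [QuotientAddGroup.eq]
      have h2 := neg_mem hmem
      rwa [neg_sub, sub_eq_neg_add] at h2
    exact hne (by rw [this])
end
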